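/- The element z = (σ_1 σ_2 ⋯ σ_{n-1})^n lies in the center of B_n, z belongs to the dual braid monoid B_n^{+*}, and for every α ∈ B_n there exists m ∈ ℕ such that α z^m ∈ B_n^{+*}. -/

import Mathlib

/-- The defining relations of the braid group on `n` strands, inside the free group on
generators indexed by `ℕ`.  Generator `i` corresponds to the Artin generator `σ_i`
(for `1 ≤ i ≤ n-1`); generators with index `0` or `≥ n` are killed. -/
def braidRels (n : ℕ) : Set (FreeGroup ℕ) :=
  {r | (∃ i j : ℕ, 1 ≤ i ∧ i + 2 ≤ j ∧ j ≤ n - 1 ∧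
          r = FreeGroup.of i * FreeGroup.of j * (FreeGroup.of i)⁻¹ * (FreeGroup.of j)⁻¹) ∨
       (∃ i : ℕ, 1 ≤ i ∧ i + 1 ≤ n - 1 ∧
          r = FreeGroup.of i * FreeGroup.of (i+1) * FreeGroup.of i *
              (FreeGroup.of (i+1) * FreeGroup.of i * FreeGroup.of (i+1))⁻¹) ∨
       (∃ i : ℕ, (i = 0 ∨ n ≤ i) ∧ r = FreeGroup.of i)}

/-- The braid group `B_n` on `n` strands. -/
abbrev Braid (n : ℕ) := PresentedGroup (braidRels n)

/-- The Artin generator `σ_i` of `B_n`. -/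
def genσ (n i : ℕ) : Braid n := PresentedGroup.of i

/-- The band generator `a_{i,j} = (σ_{j-1} ⋯ σ_{i+1}) σ_i (σ_{i+1}⁻¹ ⋯ σ_{j-1}⁻¹)`. -/
def band (n i j : ℕ) : Braid n :=
  (((List.range' (i+1) (j-1-i)).reverse.map (genσ n)).prod) * genσ n i *
    (((List.range' (i+1) (j-1-i)).reverse.map (genσ n)).prod)⁻¹

/-- The dual braid monoid `B_n^{+*}`: the submonoid of `B_n` generated by the band
generators `a_{i,j}`, `1 ≤ i < j ≤ n`. -/
def dualMonoid (n : ℕ) : Submonoid (Braid n) :=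
  Submonoid.closure {x | ∃ i j : ℕ, 1 ≤ i ∧ i < j ∧ j ≤ n ∧ x = band n i j}

/-- The submonoid `B_I^{+*}` generated by the band generators `a_{i,j}` with `i, j ∈ I`. -/
def dualMonoidOn (n : ℕ) (I : Set ℕ) : Submonoid (Braid n) :=
  Submonoid.closure {x | ∃ i j : ℕ, i ∈ I ∧ j ∈ I ∧ 1 ≤ i ∧ i < j ∧ j ≤ n ∧ x = band n i j}

/-- Evaluation of a word in the letters `σ_i^{±1}` (a letter is a pair of an index and a
sign, `true` meaning positive). -/
def evalWord (n : ℕ) (w : List (ℕ × Bool)) : Braid n :=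
  (w.map (fun p => if p.2 then genσ n p.1 else (genσ n p.1)⁻¹)).prod

/-- `γ` is `σ_i`-positive: it is represented by a word in the letters `σ_1^{±1}, …,
σ_{n-1}^{±1}` containing at least one `σ_i`, no `σ_i⁻¹`, and no `σ_j^{±1}` with `j < i`. -/
def SigmaPositive (n i : ℕ) (γ : Braid n) : Prop :=
  ∃ w : List (ℕ × Bool),
    (∀ p ∈ w, 1 ≤ p.1 ∧ p.1 ≤ n - 1) ∧
    (i, true) ∈ w ∧ (i, false) ∉ w ∧
    (∀ p ∈ w, i ≤ p.1) ∧
    evalWord n w = γ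

/-- The Dehornoy ordering on `B_n`: `α <_D β` iff `α⁻¹β` is `σ_i`-positive for some `i`. -/
def dehornoyLt (n : ℕ) (α β : Braid n) : Prop :=
  ∃ i : ℕ, 1 ≤ i ∧ i ≤ n - 1 ∧ SigmaPositive n i (α⁻¹ * β)

/-- The full twist `z = (σ_1 σ_2 ⋯ σ_{n-1})^n`. -/
def fullTwist (n : ℕ) : Braid n := (((List.range' 1 (n - 1)).map (genσ n)).prod) ^ n

/-!
Write `δ = σ_1 ⋯ σ_{n-1}`, so that `z = δ^n`. Conjugation by `δ` sends `σ_i` to `σ_{i+1}` for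
`i < n - 1`, and `δ² σ_{n-1} δ⁻² = σ_1`; hence it permutes the `n` elements `σ_1, …, σ_{n-1},
δ σ_{n-1} δ⁻¹` cyclically, and `δ^n` commutes with every generator. Being a product of the
`σ_i = a_{i,i+1}`, `z` is dual positive, and so is `σ_i⁻¹ z = δ^{i-1} (σ_2 ⋯ σ_{n-1}) δ^{n-i}`.
As `z` is central, a word for `α` with `m` negative letters gives `α z^m` dual positive.
-/

namespace Braid

variable {n : ℕ}

theorem genσ_eq_one {i : ℕ} (h : i = 0 ∨ n ≤ i) : genσ n i = 1 :=
  PresentedGroup.one_of_mem (Or.inr (Or.inr ⟨i, h, rfl⟩))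

theorem genσ_eq_one_or (n i : ℕ) : genσ n i = 1 ∨ 1 ≤ i ∧ i + 1 ≤ n := by
  by_cases h : i = 0 ∨ n ≤ i
  · exact Or.inl (genσ_eq_one h)
  · exact Or.inr (by omega)

theorem genσ_braid {i : ℕ} (h1 : 1 ≤ i) (h2 : i + 2 ≤ n) :
    genσ n i * genσ n (i + 1) * genσ n i = genσ n (i + 1) * genσ n i * genσ n (i + 1) :=
  PresentedGroup.mk_eq_mk_of_mul_inv_mem (Or.inr (Or.inl ⟨i, h1, by omega, rfl⟩))

theorem genσ_commute {i j : ℕ} (h : i + 2 ≤ j ∨ j + 2 ≤ i) : Commute (genσ n i) (genσ n j) := by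
  wlog hij : i + 2 ≤ j generalizing i j
  · exact (this h.symm (by omega)).symm
  rcases genσ_eq_one_or n i with hi | hi
  · rw [hi]; exact Commute.one_left _
  rcases genσ_eq_one_or n j with hj | hj
  · rw [hj]; exact Commute.one_right _
  have key : genσ n i * genσ n j * (genσ n i)⁻¹ * (genσ n j)⁻¹ = 1 :=
    PresentedGroup.one_of_mem (Or.inl ⟨i, j, hi.1, hij, by omega, rfl⟩)
  rwa [mul_inv_eq_one, mul_inv_eq_iff_eq_mul] at key

theorem genσ_mem_dualMonoid (n i : ℕ) : genσ n i ∈ dualMonoid n := by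
  rcases genσ_eq_one_or n i with h | h
  · rw [h]; exact one_mem _
  · refine Submonoid.subset_closure ⟨i, i + 1, h.1, i.lt_succ_self, h.2, ?_⟩
    simp [band]

def ascProd (n a b : ℕ) : Braid n := ((List.range' a b).map (genσ n)).prod

theorem ascProd_zero (a : ℕ) : ascProd n a 0 = 1 := rfl

theorem ascProd_add (a b c : ℕ) : ascProd n a (b + c) = ascProd n a b * ascProd n (a + b) c := by
  rw [ascProd, ascProd, ascProd, ← List.prod_append, ← List.map_append, List.range'_append_1]

theorem ascProd_succ (a b : ℕ) : ascProd n a (b + 1) = genσ n a * ascProd n (a + 1) b := by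
  rw [Nat.add_comm, ascProd_add]; simp [ascProd]

theorem ascProd_succ' (a b : ℕ) : ascProd n a (b + 1) = ascProd n a b * genσ n (a + b) := by
  rw [ascProd_add]; simp [ascProd]

theorem ascProd_mem_dualMonoid (a b : ℕ) : ascProd n a b ∈ dualMonoid n :=
  list_prod_mem fun _ hx ↦ by
    obtain ⟨i, -, rfl⟩ := List.mem_map.mp hx
    exact genσ_mem_dualMonoid n i

theorem genσ_commute_ascProd {a b j : ℕ} (h : a + b + 1 ≤ j ∨ j + 2 ≤ a) :
    Commute (genσ n j) (ascProd n a b) :=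
  Commute.list_prod_right _ _ fun _ hx ↦ by
    obtain ⟨i, hi, rfl⟩ := List.mem_map.mp hx
    rw [List.mem_range'_1] at hi
    exact genσ_commute (by omega)

theorem ascProd_mul_genσ {a b i : ℕ} (ha : 1 ≤ a) (hab : a + b ≤ n) (hai : a ≤ i)
    (hib : i + 2 ≤ a + b) :
    ascProd n a b * genσ n i = genσ n (i + 1) * ascProd n a b := by
  obtain ⟨p, rfl⟩ := Nat.exists_eq_add_of_le hai
  obtain ⟨q, rfl⟩ : ∃ q, b = p + 2 + q := ⟨b - p - 2, by omega⟩
  have hsplit : ascProd n a (p + 2 + q) =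
      ascProd n a p * (genσ n (a + p) * genσ n (a + p + 1)) * ascProd n (a + p + 2) q := by
    rw [ascProd_add, ascProd_add, ascProd_succ', ascProd_succ, ascProd_zero, ← add_assoc]
    group
  have hleft := genσ_commute_ascProd (n := n) (a := a) (b := p) (j := a + p + 1) (by omega)
  have hright := genσ_commute_ascProd (n := n) (a := a + p + 2) (b := q) (j := a + p) (by omega)
  rw [hsplit]
  calc ascProd n a p * (genσ n (a + p) * genσ n (a + p + 1)) * ascProd n (a + p + 2) q *
        genσ n (a + p)
      = ascProd n a p * (genσ n (a + p) * genσ n (a + p + 1) * genσ n (a + p)) *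
          ascProd n (a + p + 2) q := by simp only [mul_assoc, hright.eq]
    _ = ascProd n a p * genσ n (a + p + 1) * (genσ n (a + p) * genσ n (a + p + 1)) *
          ascProd n (a + p + 2) q := by rw [genσ_braid (by omega) (by omega)]; group
    _ = genσ n (a + p + 1) * (ascProd n a p * (genσ n (a + p) * genσ n (a + p + 1)) *
          ascProd n (a + p + 2) q) := by rw [← hleft.eq]; group

theorem ascProd_pow_mul_genσ {a b i : ℕ} (ha : 1 ≤ a) (hab : a + b ≤ n) (hai : a ≤ i) :
    ∀ k, i + k + 1 ≤ a + b → ascProd n a b ^ k * genσ n i = genσ n (i + k) * ascProd n a b ^ k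
  | 0, _ => by simp
  | k + 1, hk => by
    rw [pow_succ', mul_assoc, ascProd_pow_mul_genσ ha hab hai k (by omega), ← mul_assoc,
      ascProd_mul_genσ ha hab (by omega) (by omega), mul_assoc, ← pow_succ', ← add_assoc]

theorem ascProd_mul_ascProd {a b k : ℕ} (ha : 1 ≤ a) (hab : a + b ≤ n) (hk : k + 1 ≤ b) :
    ascProd n a b * ascProd n a k = ascProd n (a + 1) k * ascProd n a b := by
  induction k with
  | zero => simp [ascProd_zero]
  | succ k ih =>
    rw [ascProd_succ', ascProd_succ', ← mul_assoc, ih (by omega), mul_assoc,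
      ascProd_mul_genσ ha hab (by omega) (by omega), ← mul_assoc, Nat.add_right_comm]

/-- Writing `δ = σ_a B = A σ_{a+b}`, the shift `δ A = B δ` turns `σ_a δ² = σ_a δ A σ_{a+b}`
into `σ_a B δ σ_{a+b} = δ² σ_{a+b}`. -/
theorem ascProd_sq_mul_genσ {a b : ℕ} (ha : 1 ≤ a) (hab : a + b + 1 ≤ n) :
    ascProd n a (b + 1) ^ 2 * genσ n (a + b) = genσ n a * ascProd n a (b + 1) ^ 2 := by
  have hshift := ascProd_mul_ascProd (n := n) (k := b) ha (by omega) le_rfl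
  set δ := ascProd n a (b + 1)
  have hδ₁ : δ = genσ n a * ascProd n (a + 1) b := ascProd_succ a b
  have hδ₂ : δ = ascProd n a b * genσ n (a + b) := ascProd_succ' a b
  calc δ ^ 2 * genσ n (a + b)
      = genσ n a * (ascProd n (a + 1) b * δ) * genσ n (a + b) := by
        rw [sq]; nth_rw 1 [hδ₁]; group
    _ = genσ n a * (δ * (ascProd n a b * genσ n (a + b))) := by rw [← hshift]; group
    _ = genσ n a * δ ^ 2 := by rw [← hδ₂, sq]

theorem ascProd_pow_commute_genσ {a b i : ℕ} (ha : 1 ≤ a) (hab : a + b ≤ n) (hai : a ≤ i)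
    (hib : i < a + b) : Commute (ascProd n a b ^ (b + 1)) (genσ n i) := by
  obtain ⟨p, rfl⟩ := Nat.exists_eq_add_of_le hai
  obtain ⟨r, rfl⟩ : ∃ r, b = p + r + 1 := ⟨b - p - 1, by omega⟩
  set δ := ascProd n a (p + r + 1)
  have hfirst : δ ^ p * genσ n a = genσ n (a + p) * δ ^ p :=
    ascProd_pow_mul_genσ ha hab le_rfl p (by omega)
  have hlast : δ ^ 2 * genσ n (a + (p + r)) = genσ n a * δ ^ 2 := ascProd_sq_mul_genσ ha hab
  have hrest : δ ^ r * genσ n (a + p) = genσ n (a + p + r) * δ ^ r :=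
    ascProd_pow_mul_genσ ha hab (by omega) r (by omega)
  have hpow : δ ^ (p + r + 1 + 1) = δ ^ p * δ ^ 2 * δ ^ r := by
    rw [← pow_add, ← pow_add]; ring_nf
  calc δ ^ (p + r + 1 + 1) * genσ n (a + p)
      = δ ^ p * (δ ^ 2 * genσ n (a + (p + r))) * δ ^ r := by
        rw [hpow, mul_assoc _ (δ ^ r), hrest, ← add_assoc]; group
    _ = genσ n (a + p) * δ ^ (p + r + 1 + 1) := by
        rw [hlast, ← mul_assoc, hfirst, hpow]; group

theorem inv_genσ_mul_ascProd_pow_mem {a b i : ℕ} (ha : 1 ≤ a) (hab : a + b ≤ n) (hai : a ≤ i)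
    (hib : i < a + b) : (genσ n i)⁻¹ * ascProd n a b ^ (b + 1) ∈ dualMonoid n := by
  obtain ⟨p, rfl⟩ := Nat.exists_eq_add_of_le hai
  obtain ⟨r, rfl⟩ : ∃ r, b = p + r + 1 := ⟨b - p - 1, by omega⟩
  set δ := ascProd n a (p + r + 1)
  have hfirst : δ ^ p * genσ n a = genσ n (a + p) * δ ^ p :=
    ascProd_pow_mul_genσ ha hab le_rfl p (by omega)
  have hshift : (genσ n (a + p))⁻¹ * δ ^ p = δ ^ p * (genσ n a)⁻¹ := by
    rw [inv_mul_eq_iff_eq_mul, ← mul_assoc, ← hfirst, mul_inv_cancel_right]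
  have hstrip : (genσ n a)⁻¹ * δ = ascProd n (a + 1) (p + r) := by
    rw [inv_mul_eq_iff_eq_mul]; exact ascProd_succ _ _
  have hdecomp : (genσ n (a + p))⁻¹ * δ ^ (p + r + 1 + 1) =
      δ ^ p * ascProd n (a + 1) (p + r) * δ ^ (r + 1) := by
    rw [show p + r + 1 + 1 = p + 1 + (r + 1) by omega, pow_add, pow_succ, ← mul_assoc,
      ← mul_assoc, hshift, mul_assoc (δ ^ p), hstrip]
  rw [hdecomp]
  exact mul_mem (mul_mem (pow_mem (ascProd_mem_dualMonoid _ _) _) (ascProd_mem_dualMonoid _ _))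
    (pow_mem (ascProd_mem_dualMonoid _ _) _)

theorem fullTwist_eq_ascProd_pow (hn : 1 ≤ n) :
    fullTwist n = ascProd n 1 (n - 1) ^ (n - 1 + 1) := by
  rw [Nat.sub_add_cancel hn]; rfl

theorem fullTwist_commute_genσ (n i : ℕ) : Commute (fullTwist n) (genσ n i) := by
  rcases genσ_eq_one_or n i with h | ⟨h1, h2⟩
  · rw [h]; exact Commute.one_right _
  · rw [fullTwist_eq_ascProd_pow (by omega)]
    exact ascProd_pow_commute_genσ le_rfl (by omega) h1 (by omega)

theorem fullTwist_mem_center (n : ℕ) : fullTwist n ∈ Subgroup.center (Braid n) := by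
  rw [Subgroup.center_eq_iInf (PresentedGroup.closure_range_of _)]
  simp only [Subgroup.mem_iInf, Set.forall_mem_range, Subgroup.mem_centralizer_singleton_iff]
  exact fun i ↦ (fullTwist_commute_genσ n i).eq

theorem fullTwist_mem_dualMonoid (n : ℕ) : fullTwist n ∈ dualMonoid n :=
  pow_mem (ascProd_mem_dualMonoid 1 (n - 1)) n

theorem inv_genσ_mul_fullTwist_mem (n i : ℕ) : (genσ n i)⁻¹ * fullTwist n ∈ dualMonoid n := by
  rcases genσ_eq_one_or n i with h | ⟨h1, h2⟩
  · rw [h, inv_one, one_mul]; exact fullTwist_mem_dualMonoid n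
  · rw [fullTwist_eq_ascProd_pow (by omega)]
    exact inv_genσ_mul_ascProd_pow_mem le_rfl (by omega) h1 (by omega)

end Braid

theorem exists_mul_pow_mem_of_closure_eq_top {G : Type*} [Group G] {S : Set G}
    (hS : Subgroup.closure S = ⊤) {M : Submonoid G} {z : G} (hz : z ∈ Subgroup.center G)
    (hSM : S ⊆ M) (hSz : ∀ s ∈ S, s⁻¹ * z ∈ M) (g : G) : ∃ m : ℕ, g * z ^ m ∈ M := by
  have hg : g ∈ Subgroup.closure S := hS ▸ Subgroup.mem_top g
  induction hg using Subgroup.closure_induction'' with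
  | mem s hs => exact ⟨0, by simpa using hSM hs⟩
  | inv_mem s hs => exact ⟨1, by simpa using hSz s hs⟩
  | one => exact ⟨0, by simp⟩
  | mul x y _ _ hx hy =>
    obtain ⟨a, ha⟩ := hx
    obtain ⟨b, hb⟩ := hy
    have hyz : y * z ^ a = z ^ a * y := (Commute.pow_right (Subgroup.mem_center_iff.mp hz y) a).eq
    refine ⟨a + b, ?_⟩
    rw [pow_add, mul_assoc x, ← mul_assoc y, hyz]
    simpa only [mul_assoc] using mul_mem ha hb

theorem fullTwist_central_dual_general (n : ℕ) :
    fullTwist n ∈ Subgroup.center (Braid n) ∧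
    fullTwist n ∈ dualMonoid n ∧
    ∀ α : Braid n, ∃ m : ℕ, α * fullTwist n ^ m ∈ dualMonoid n :=
  ⟨Braid.fullTwist_mem_center n, Braid.fullTwist_mem_dualMonoid n,
    exists_mul_pow_mem_of_closure_eq_top (PresentedGroup.closure_range_of _)
      (Braid.fullTwist_mem_center n) (Set.range_subset_iff.2 (Braid.genσ_mem_dualMonoid n))
      (Set.forall_mem_range.2 (Braid.inv_genσ_mul_fullTwist_mem n))⟩

/-- Theorem: `z = (σ_1 ⋯ σ_{n-1})^n` is central, lies in `B_n^{+*}`, and for every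
`α ∈ B_n` there is `m` with `α z^m ∈ B_n^{+*}`. -/
theorem fullTwist_central_dual (n : ℕ) (hn : 2 ≤ n) :
    fullTwist n ∈ Subgroup.center (Braid n) ∧
    fullTwist n ∈ dualMonoid n ∧
    ∀ α : Braid n, ∃ m : ℕ, α * fullTwist n ^ m ∈ dualMonoid n :=
  fullTwist_central_dual_general n
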